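/- arXiv:2307.00564 — 4 statements merged into one kernel-verified Lean document; each statement's English description precedes it below -/
import Mathlib

section
/- For N ≥ 3, 0 < λ < N, and θ > N, there exists a constant C > 0 such that for all x ∈ ℝ^N, ∫_{ℝ^N} |x−y|^{−λ} (1+|y|²)^{−θ/2} dy ≤ C (1+|x|²)^{−λ/2}. -/
/-!
Write `s = √(1 + ‖x‖²)`. Where `‖x - y‖ ≥ s / 2` the singular factor is at most `2 ^ λ s ^ (-λ)`,
and `(1 + ‖y‖²) ^ (-θ/2)` is integrable because `θ > N`. On the ball `‖x - y‖ < s / 2` one has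
`s ≤ 4 √(1 + ‖y‖²)`, so the second factor is at most `4 ^ θ s ^ (-θ)`, while by scaling the
integral of `‖x - y‖ ^ (-λ)` over that ball is a multiple of `s ^ (N - λ)` (finite as `λ < N`).
Since `θ > N`, the product `s ^ (N - θ - λ)` is again `O(s ^ (-λ))`.
-/

open MeasureTheory Real Metric Set Module

lemma rpow_neg_le_mul_rpow_neg {s u c a : ℝ} (hs : 0 < s) (hc : 0 < c) (ha : 0 ≤ a)
    (h : s ≤ c * u) : u ^ (-a) ≤ c ^ a * s ^ (-a) :=
  calc u ^ (-a) ≤ (s / c) ^ (-a) :=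
        rpow_le_rpow_of_nonpos (by positivity) (by rwa [div_le_iff₀' hc]) (by linarith)
    _ = c ^ a * s ^ (-a) := by
        rw [div_rpow hs.le hc.le, rpow_neg hc.le, div_inv_eq_mul, mul_comm]

lemma one_add_sq_rpow_neg_half (a s : ℝ) :
    (1 + a ^ 2) ^ (-(s / 2)) = √(1 + a ^ 2) ^ (-s) := by
  rw [sqrt_eq_rpow, ← rpow_mul (by positivity)]
  ring_nf

lemma one_le_sqrt_one_add_sq (a : ℝ) : 1 ≤ √(1 + a ^ 2) :=
  one_le_sqrt.2 (by nlinarith)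

section Bracket

variable {E : Type*} [SeminormedAddCommGroup E]

lemma sqrt_one_add_norm_sq_le_four_mul {x y : E} (h : ‖x - y‖ < √(1 + ‖x‖ ^ 2) / 2) :
    √(1 + ‖x‖ ^ 2) ≤ 4 * √(1 + ‖y‖ ^ 2) := by
  have hx : √(1 + ‖x‖ ^ 2) ≤ 1 + ‖x‖ :=
    (sqrt_le_left (by positivity)).2 (by nlinarith [norm_nonneg x])
  have hy : ‖y‖ ≤ √(1 + ‖y‖ ^ 2) := le_sqrt_of_sq_le (by linarith)
  have hy1 := one_le_sqrt_one_add_sq ‖y‖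
  have := norm_sub_norm_le x y
  linarith

lemma norm_sub_rpow_neg_mul_le (x y : E) {lam θ : ℝ} (hlam : 0 ≤ lam) (hθ : 0 ≤ θ) :
    ‖x - y‖ ^ (-lam) * (1 + ‖y‖ ^ 2) ^ (-(θ / 2)) ≤
      2 ^ lam * √(1 + ‖x‖ ^ 2) ^ (-lam) * (1 + ‖y‖ ^ 2) ^ (-(θ / 2)) +
      4 ^ θ * √(1 + ‖x‖ ^ 2) ^ (-θ) *
        (ball x (√(1 + ‖x‖ ^ 2) / 2)).indicator (fun y => ‖x - y‖ ^ (-lam)) y := by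
  have hs : 0 < √(1 + ‖x‖ ^ 2) := one_pos.trans_le (one_le_sqrt_one_add_sq _)
  by_cases hy : y ∈ ball x (√(1 + ‖x‖ ^ 2) / 2)
  · rw [mem_ball', dist_eq_norm] at hy
    have hnear : (1 + ‖y‖ ^ 2) ^ (-(θ / 2)) ≤ 4 ^ θ * √(1 + ‖x‖ ^ 2) ^ (-θ) := by
      rw [one_add_sq_rpow_neg_half]
      exact rpow_neg_le_mul_rpow_neg hs four_pos hθ (sqrt_one_add_norm_sq_le_four_mul hy)
    rw [indicator_of_mem (by rwa [mem_ball', dist_eq_norm])]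
    have : 0 ≤ 2 ^ lam * √(1 + ‖x‖ ^ 2) ^ (-lam) * (1 + ‖y‖ ^ 2) ^ (-(θ / 2)) := by positivity
    nlinarith [rpow_nonneg (norm_nonneg (x - y)) (-lam)]
  · rw [mem_ball', dist_eq_norm, not_lt] at hy
    have hfar : ‖x - y‖ ^ (-lam) ≤ 2 ^ lam * √(1 + ‖x‖ ^ 2) ^ (-lam) :=
      rpow_neg_le_mul_rpow_neg hs two_pos hlam (by linarith)
    rw [indicator_of_notMem (by rwa [mem_ball', dist_eq_norm, not_lt]), mul_zero, add_zero]
    gcongr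

lemma indicator_ball_norm_sub_rpow (x : E) (p r : ℝ) :
    (ball x r).indicator (fun y => ‖x - y‖ ^ p) =
      fun y => (ball 0 r).indicator (fun z => ‖z‖ ^ p) (x - y) := by
  ext y
  simp only [indicator, mem_ball, dist_eq_norm', zero_sub, norm_neg]

end Bracket

section Haar

variable {E : Type*} [NormedAddCommGroup E] [NormedSpace ℝ E] [FiniteDimensional ℝ E]
  [MeasurableSpace E] [BorelSpace E] (μ : Measure E) [μ.IsAddHaarMeasure]

lemma setIntegral_ball_norm_rpow (p : ℝ) {R : ℝ} (hR : 0 < R) :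
    ∫ z in ball (0 : E) R, ‖z‖ ^ p ∂μ =
      R ^ (finrank ℝ E + p) * ∫ z in ball (0 : E) 1, ‖z‖ ^ p ∂μ := by
  have h := Measure.setIntegral_comp_smul_of_pos μ (fun z : E => ‖z‖ ^ p) (ball 0 1) hR
  rw [smul_unitBall_of_pos hR, smul_eq_mul] at h
  simp_rw [norm_smul, norm_of_nonneg hR.le, mul_rpow hR.le (norm_nonneg _)] at h
  rw [integral_const_mul] at h
  rw [rpow_add hR, rpow_natCast]
  field_simp at h ⊢
  linarith

lemma integral_indicator_ball_norm_sub_rpow (x : E) (p : ℝ) {r : ℝ} (hr : 0 < r) :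
    ∫ y, (ball x r).indicator (fun y => ‖x - y‖ ^ p) y ∂μ =
      r ^ (finrank ℝ E + p) * ∫ z in ball (0 : E) 1, ‖z‖ ^ p ∂μ := by
  rw [indicator_ball_norm_sub_rpow, integral_sub_left_eq_self,
    integral_indicator measurableSet_ball, setIntegral_ball_norm_rpow μ p hr]

lemma integrable_indicator_ball_norm_sub_rpow_neg (x : E) {α : ℝ} (hd : 1 ≤ finrank ℝ E)
    (hα : α < finrank ℝ E) (r : ℝ) :
    Integrable ((ball x r).indicator fun y => ‖x - y‖ ^ (-α)) μ := by
  rw [indicator_ball_norm_sub_rpow]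
  refine (IntegrableOn.integrable_indicator ?_ measurableSet_ball).comp_sub_left x
  exact integrableOn_ball_of_norm_le_rpow hd hα (C := 1)
    (ae_of_all _ fun z => by simp [abs_of_nonneg, rpow_nonneg])
    (Measurable.aestronglyMeasurable (by fun_prop))

theorem exists_integral_norm_sub_rpow_mul_le {lam θ : ℝ} (h0 : 0 < lam)
    (hlt : lam < finrank ℝ E) (hθ : finrank ℝ E < θ) :
    ∃ C > 0, ∀ x : E,
      ∫ y, ‖x - y‖ ^ (-lam) * (1 + ‖y‖ ^ 2) ^ (-(θ / 2)) ∂μ ≤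
        C * (1 + ‖x‖ ^ 2) ^ (-(lam / 2)) := by
  set K := ∫ y, (1 + ‖y‖ ^ 2) ^ (-(θ / 2)) ∂μ
  set I := ∫ z in ball (0 : E) 1, ‖z‖ ^ (-lam) ∂μ
  have hK : Integrable (fun y : E => (1 + ‖y‖ ^ 2) ^ (-(θ / 2))) μ := by
    simpa only [neg_div] using integrable_rpow_neg_one_add_norm_sq hθ
  refine ⟨2 ^ lam * K + 4 ^ θ * I + 1, by positivity, fun x => ?_⟩
  set s := √(1 + ‖x‖ ^ 2)
  have hs : 1 ≤ s := one_le_sqrt_one_add_sq _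
  set near := (ball x (s / 2)).indicator fun y => ‖x - y‖ ^ (-lam)
  have near_int : Integrable near μ :=
    integrable_indicator_ball_norm_sub_rpow_neg μ x (by exact_mod_cast h0.trans hlt) hlt _
  have near_eq : ∫ y, near y ∂μ = (s / 2) ^ (finrank ℝ E - lam) * I :=
    integral_indicator_ball_norm_sub_rpow μ x _ (by positivity)
  have decay : s ^ (-θ) * (s / 2) ^ (finrank ℝ E - lam) ≤ s ^ (-lam) :=
    calc s ^ (-θ) * (s / 2) ^ (finrank ℝ E - lam) ≤ s ^ (-θ) * s ^ (finrank ℝ E - lam) := by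
          gcongr; linarith
      _ = s ^ (-θ + (finrank ℝ E - lam)) := (rpow_add (by positivity) _ _).symm
      _ ≤ s ^ (-lam) := rpow_le_rpow_of_exponent_le hs (by linarith)
  calc ∫ y, ‖x - y‖ ^ (-lam) * (1 + ‖y‖ ^ 2) ^ (-(θ / 2)) ∂μ
      ≤ ∫ y, 2 ^ lam * s ^ (-lam) * (1 + ‖y‖ ^ 2) ^ (-(θ / 2)) +
          4 ^ θ * s ^ (-θ) * near y ∂μ :=
        integral_mono_of_nonneg (ae_of_all _ fun y => by positivity)
          ((hK.const_mul _).add (near_int.const_mul _))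
          (ae_of_all _ fun y => norm_sub_rpow_neg_mul_le x y h0.le (by linarith))
    _ = 2 ^ lam * s ^ (-lam) * K + 4 ^ θ * (s ^ (-θ) * (s / 2) ^ (finrank ℝ E - lam)) * I := by
        rw [integral_add (hK.const_mul _) (near_int.const_mul _), integral_const_mul,
          integral_const_mul, near_eq]
        ring
    _ ≤ (2 ^ lam * K + 4 ^ θ * I + 1) * s ^ (-lam) := by
        have hI : 0 ≤ I := setIntegral_nonneg measurableSet_ball fun z _ => by positivity
        have hK0 : 0 ≤ K := integral_nonneg fun y => by positivity
        have : 4 ^ θ * (s ^ (-θ) * (s / 2) ^ (finrank ℝ E - lam)) * I ≤ 4 ^ θ * s ^ (-lam) * I := by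
          gcongr
        nlinarith [rpow_nonneg (zero_le_one.trans hs) (-lam)]
    _ = (2 ^ lam * K + 4 ^ θ * I + 1) * (1 + ‖x‖ ^ 2) ^ (-(lam / 2)) := by
        rw [one_add_sq_rpow_neg_half]

end Haar

theorem stmt0_general (N : ℕ) (lam θ : ℝ) (h0 : 0 < lam) (hlt : lam < N)
    (hθ : (N : ℝ) < θ) :
    ∃ C > 0, ∀ x : EuclideanSpace ℝ (Fin N),
      (∫ y : EuclideanSpace ℝ (Fin N),
          ‖x - y‖ ^ (-lam) * (1 + ‖y‖ ^ 2) ^ (-(θ / 2)))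
        ≤ C * (1 + ‖x‖ ^ 2) ^ (-(lam / 2)) := by
  apply exists_integral_norm_sub_rpow_mul_le volume h0 <;> simpa

theorem stmt0 (N : ℕ) (hN : 3 ≤ N) (lam θ : ℝ) (h0 : 0 < lam) (hlt : lam < N)
    (hθ : (N : ℝ) < θ) :
    ∃ C > 0, ∀ x : EuclideanSpace ℝ (Fin N),
      (∫ y : EuclideanSpace ℝ (Fin N),
          ‖x - y‖ ^ (-lam) * (1 + ‖y‖ ^ 2) ^ (-(θ / 2)))
        ≤ C * (1 + ‖x‖ ^ 2) ^ (-(lam / 2)) :=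
  stmt0_general N lam θ h0 hlt hθ
end

section
/- Let N ≥ 3 and let g : ℝ^N → ℝ be continuous with sup_x (1+|x|²)^{(N+2)/2} |g(x)| = ‖g‖_Y < ∞. Define φ(x) = (N(N−2)ω_N)^{−1} ∫_{ℝ^N} g(y) |x−y|^{−(N−2)} dy with ω_N = 2π^{N/2}/(N Γ(N/2)). Then there is a constant C depending only on N with sup_x (1+|x|²)^{(N−2)/2} |φ(x)| ≤ C ‖g‖_Y. -/
/-!
With `s = N - 2`, `p = (N + 2) / 2` and `w = (1 + ‖·‖²)^(-p)`, the potential of `g` is bounded by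
`‖g‖_Y ∫ w (x - z) ‖z‖^(-s) dz`. Split this integral at `‖z‖ = r := √(1 + ‖x‖²) / 2`. On the ball,
`1 + ‖x - z‖² ≥ r²`, so `w (x - z) ≤ r^(-2p)`, and scaling gives
`∫_{‖z‖<r} ‖z‖^(-s) = r^(N - s) ∫_{‖z‖<1} ‖z‖^(-s)`; as `2p > N` and `r ≥ 1/2`, this part is
`O(r^(-s))`. Off the ball, `‖z‖^(-s) ≤ r^(-s)` and `w` is integrable. Hence the integral is
`O((1 + ‖x‖²)^(-s/2))`.
-/

open MeasureTheory Real Metric Set Module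

lemma sq_le_one_add_norm_sub_sq {F : Type*} [NormedAddCommGroup F] {x z : F} {r : ℝ}
    (hz : ‖z‖ ≤ r) (hrx : 4 * r ^ 2 ≤ 1 + ‖x‖ ^ 2) :
    r ^ 2 ≤ 1 + ‖x - z‖ ^ 2 := by
  have htri : ‖x‖ ≤ ‖x - z‖ + r := (norm_le_norm_sub_add x z).trans (by linarith)
  nlinarith [norm_nonneg x, norm_nonneg z, sq_nonneg (‖x - z‖ - r)]

variable {E : Type*} [NormedAddCommGroup E] [NormedSpace ℝ E] [FiniteDimensional ℝ E]
  [MeasurableSpace E] [BorelSpace E] {μ : Measure E} [μ.IsAddHaarMeasure]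

lemma integrableOn_ball_norm_rpow_neg {s : ℝ} (hs0 : 0 ≤ s) (hs : s < finrank ℝ E) (r : ℝ) :
    IntegrableOn (fun z : E => ‖z‖ ^ (-s)) (ball 0 r) μ := by
  have hd : 1 ≤ finrank ℝ E := by
    exact_mod_cast (show (0 : ℝ) < finrank ℝ E from hs0.trans_lt hs)
  refine integrableOn_ball_of_norm_le_rpow hd hs (C := 1) (Filter.Eventually.of_forall fun z => ?_)
    (measurable_norm.pow_const _).aestronglyMeasurable
  rw [one_mul, norm_of_nonneg (by positivity)]

lemma setIntegral_ball_norm_rpow_neg (s : ℝ) {r : ℝ} (hr : 0 < r) :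
    ∫ z in ball (0 : E) r, ‖z‖ ^ (-s) ∂μ =
      r ^ ((finrank ℝ E : ℝ) - s) * ∫ z in ball (0 : E) 1, ‖z‖ ^ (-s) ∂μ := by
  have hscale := μ.setIntegral_comp_smul_of_pos (fun z : E => ‖z‖ ^ (-s)) (ball 0 1) hr
  simp only [norm_smul, norm_of_nonneg hr.le, mul_rpow hr.le (norm_nonneg _),
    integral_const_mul, smul_unitBall_of_pos hr, smul_eq_mul] at hscale
  rw [sub_eq_add_neg, rpow_add hr, rpow_natCast, mul_assoc, hscale,
    mul_inv_cancel_left₀ (by positivity)]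

lemma integrable_one_add_norm_sq_rpow_neg {p : ℝ} (hp : (finrank ℝ E : ℝ) / 2 < p) :
    Integrable (fun y : E => (1 + ‖y‖ ^ 2) ^ (-p)) μ := by
  have h := integrable_rpow_neg_one_add_norm_sq (E := E) (μ := μ) (r := 2 * p) (by linarith)
  rwa [show -(2 * p) / 2 = -p by ring] at h

lemma integrable_one_add_norm_sub_sq_rpow_mul_norm_rpow {s p : ℝ} (hs0 : 0 ≤ s)
    (hs : s < finrank ℝ E) (hp : (finrank ℝ E : ℝ) / 2 < p) (x : E) :
    Integrable (fun z : E => (1 + ‖x - z‖ ^ 2) ^ (-p) * ‖z‖ ^ (-s)) μ := by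
  have hmeas : AEStronglyMeasurable (fun z : E => (1 + ‖x - z‖ ^ 2) ^ (-p) * ‖z‖ ^ (-s)) μ :=
    (by fun_prop : Measurable _).aestronglyMeasurable
  have hweight_le_one : ∀ z : E, (1 + ‖x - z‖ ^ 2) ^ (-p) ≤ 1 := fun z =>
    rpow_le_one_of_one_le_of_nonpos (by nlinarith [sq_nonneg ‖x - z‖])
      (by linarith [(finrank ℝ E).cast_nonneg (α := ℝ)])
  have hnear : IntegrableOn (fun z : E => (1 + ‖x - z‖ ^ 2) ^ (-p) * ‖z‖ ^ (-s)) (ball 0 1) μ := by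
    refine (integrableOn_ball_norm_rpow_neg hs0 hs 1).mono' hmeas.restrict
      (Filter.Eventually.of_forall fun z => ?_)
    rw [norm_of_nonneg (by positivity)]
    exact mul_le_of_le_one_left (by positivity) (hweight_le_one z)
  have hfar : IntegrableOn (fun z : E => (1 + ‖x - z‖ ^ 2) ^ (-p) * ‖z‖ ^ (-s)) (ball 0 1)ᶜ μ := by
    refine ((integrable_one_add_norm_sq_rpow_neg hp).comp_sub_left x).integrableOn.mono'
      hmeas.restrict ?_
    filter_upwards [ae_restrict_mem measurableSet_ball.compl] with z hz
    have hz1 : 1 ≤ ‖z‖ := by simpa using hz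
    rw [norm_of_nonneg (by positivity)]
    exact mul_le_of_le_one_right (by positivity)
      (rpow_le_one_of_one_le_of_nonpos hz1 (neg_nonpos.2 hs0))
  simpa using hnear.union hfar

lemma setIntegral_ball_one_add_norm_sub_sq_rpow_mul_norm_rpow_le {s p : ℝ} (hs0 : 0 ≤ s)
    (hs : s < finrank ℝ E) (hp : (finrank ℝ E : ℝ) / 2 < p) {x : E} {r : ℝ} (hr : 1 / 2 ≤ r)
    (hrx : 4 * r ^ 2 ≤ 1 + ‖x‖ ^ 2) :
    ∫ z in ball (0 : E) r, (1 + ‖x - z‖ ^ 2) ^ (-p) * ‖z‖ ^ (-s) ∂μ ≤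
      (1 / 2) ^ ((finrank ℝ E : ℝ) - 2 * p) * r ^ (-s) * ∫ z in ball (0 : E) 1, ‖z‖ ^ (-s) ∂μ := by
  have hr0 : 0 < r := by linarith
  have hweight : ∀ z ∈ ball (0 : E) r, (1 + ‖x - z‖ ^ 2) ^ (-p) ≤ r ^ (-(2 * p)) := by
    intro z hz
    have hrz : r ^ 2 ≤ 1 + ‖x - z‖ ^ 2 :=
      sq_le_one_add_norm_sub_sq (mem_ball_zero_iff.1 hz).le hrx
    calc (1 + ‖x - z‖ ^ 2) ^ (-p) ≤ (r ^ 2) ^ (-p) :=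
          rpow_le_rpow_of_nonpos (by positivity) hrz
            (by linarith [(finrank ℝ E).cast_nonneg (α := ℝ)])
      _ = r ^ (-(2 * p)) := by rw [← rpow_natCast, ← rpow_mul hr0.le]; ring_nf
  have hI1 : 0 ≤ ∫ z in ball (0 : E) 1, ‖z‖ ^ (-s) ∂μ :=
    setIntegral_nonneg measurableSet_ball fun z _ => by positivity
  calc ∫ z in ball (0 : E) r, (1 + ‖x - z‖ ^ 2) ^ (-p) * ‖z‖ ^ (-s) ∂μ
      ≤ ∫ z in ball (0 : E) r, r ^ (-(2 * p)) * ‖z‖ ^ (-s) ∂μ :=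
        setIntegral_mono_on
          (integrable_one_add_norm_sub_sq_rpow_mul_norm_rpow hs0 hs hp x).integrableOn
          ((integrableOn_ball_norm_rpow_neg hs0 hs r).const_mul _) measurableSet_ball
          fun z hz => mul_le_mul_of_nonneg_right (hweight z hz) (by positivity)
    _ = r ^ ((finrank ℝ E : ℝ) - 2 * p) * r ^ (-s) * ∫ z in ball (0 : E) 1, ‖z‖ ^ (-s) ∂μ := by
        rw [integral_const_mul, setIntegral_ball_norm_rpow_neg s hr0, ← mul_assoc, ← rpow_add hr0,
          ← rpow_add hr0]
        ring_nf
    _ ≤ (1 / 2) ^ ((finrank ℝ E : ℝ) - 2 * p) * r ^ (-s) *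
          ∫ z in ball (0 : E) 1, ‖z‖ ^ (-s) ∂μ := by
        refine mul_le_mul_of_nonneg_right (mul_le_mul_of_nonneg_right ?_ (by positivity)) hI1
        exact rpow_le_rpow_of_nonpos (by norm_num) hr (by linarith)

lemma setIntegral_compl_ball_one_add_norm_sub_sq_rpow_mul_norm_rpow_le {s p : ℝ} (hs0 : 0 ≤ s)
    (hp : (finrank ℝ E : ℝ) / 2 < p) (x : E) {r : ℝ} (hr : 0 < r) :
    ∫ z in (ball (0 : E) r)ᶜ, (1 + ‖x - z‖ ^ 2) ^ (-p) * ‖z‖ ^ (-s) ∂μ ≤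
      r ^ (-s) * ∫ y, (1 + ‖y‖ ^ 2) ^ (-p) ∂μ := by
  have hweight := (integrable_one_add_norm_sq_rpow_neg (μ := μ) hp).comp_sub_left x
  calc ∫ z in (ball (0 : E) r)ᶜ, (1 + ‖x - z‖ ^ 2) ^ (-p) * ‖z‖ ^ (-s) ∂μ
      ≤ ∫ z in (ball (0 : E) r)ᶜ, r ^ (-s) * (1 + ‖x - z‖ ^ 2) ^ (-p) ∂μ := by
        refine integral_mono_of_nonneg (Filter.Eventually.of_forall fun z => by positivity)
          (hweight.const_mul _).integrableOn ?_
        filter_upwards [ae_restrict_mem measurableSet_ball.compl] with z hz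
        have hrz : r ≤ ‖z‖ := by simpa using hz
        rw [mul_comm]
        exact mul_le_mul_of_nonneg_right (rpow_le_rpow_of_nonpos hr hrz (neg_nonpos.2 hs0))
          (by positivity)
    _ ≤ r ^ (-s) * ∫ z, (1 + ‖x - z‖ ^ 2) ^ (-p) ∂μ := by
        rw [integral_const_mul]
        exact mul_le_mul_of_nonneg_left
          (setIntegral_le_integral hweight (Filter.Eventually.of_forall fun z => by positivity))
          (by positivity)
    _ = r ^ (-s) * ∫ y, (1 + ‖y‖ ^ 2) ^ (-p) ∂μ := by
        rw [integral_sub_left_eq_self (fun y => (1 + ‖y‖ ^ 2) ^ (-p)) μ x]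

lemma integral_one_add_norm_sub_sq_rpow_mul_norm_rpow_le {s p : ℝ} (hs0 : 0 ≤ s)
    (hs : s < finrank ℝ E) (hp : (finrank ℝ E : ℝ) / 2 < p) {x : E} {r : ℝ} (hr : 1 / 2 ≤ r)
    (hrx : 4 * r ^ 2 ≤ 1 + ‖x‖ ^ 2) :
    ∫ z, (1 + ‖x - z‖ ^ 2) ^ (-p) * ‖z‖ ^ (-s) ∂μ ≤
      r ^ (-s) * ((1 / 2) ^ ((finrank ℝ E : ℝ) - 2 * p) * ∫ z in ball (0 : E) 1, ‖z‖ ^ (-s) ∂μ +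
        ∫ y, (1 + ‖y‖ ^ 2) ^ (-p) ∂μ) := by
  rw [← integral_add_compl measurableSet_ball
    (integrable_one_add_norm_sub_sq_rpow_mul_norm_rpow hs0 hs hp x)]
  calc _ ≤ (1 / 2) ^ ((finrank ℝ E : ℝ) - 2 * p) * r ^ (-s) *
          ∫ z in ball (0 : E) 1, ‖z‖ ^ (-s) ∂μ + r ^ (-s) * ∫ y, (1 + ‖y‖ ^ 2) ^ (-p) ∂μ :=
        add_le_add (setIntegral_ball_one_add_norm_sub_sq_rpow_mul_norm_rpow_le hs0 hs hp hr hrx)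
          (setIntegral_compl_ball_one_add_norm_sub_sq_rpow_mul_norm_rpow_le hs0 hp x (by linarith))
    _ = _ := by ring

theorem exists_integral_one_add_norm_sub_sq_rpow_mul_norm_rpow_le {s p : ℝ} (hs0 : 0 ≤ s)
    (hs : s < finrank ℝ E) (hp : (finrank ℝ E : ℝ) / 2 < p) :
    ∃ C > 0, ∀ x : E,
      ∫ z, (1 + ‖x - z‖ ^ 2) ^ (-p) * ‖z‖ ^ (-s) ∂μ ≤ C * (1 + ‖x‖ ^ 2) ^ (-(s / 2)) := by
  set K := (1 / 2) ^ ((finrank ℝ E : ℝ) - 2 * p) * ∫ z in ball (0 : E) 1, ‖z‖ ^ (-s) ∂μ +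
    ∫ y, (1 + ‖y‖ ^ 2) ^ (-p) ∂μ
  have hK : 0 ≤ K := by
    have : 0 ≤ ∫ z in ball (0 : E) 1, ‖z‖ ^ (-s) ∂μ :=
      setIntegral_nonneg measurableSet_ball fun z _ => by positivity
    have : 0 ≤ ∫ y, (1 + ‖y‖ ^ 2) ^ (-p) ∂μ := integral_nonneg fun y => by positivity
    positivity
  refine ⟨2 ^ s * K + 1, by positivity, fun x => ?_⟩
  set A := 1 + ‖x‖ ^ 2
  have hA : 1 ≤ A := by simp only [A]; nlinarith [sq_nonneg ‖x‖]
  have hr : 1 / 2 ≤ √A / 2 := by have := one_le_sqrt.2 hA; linarith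
  have hrx : 4 * (√A / 2) ^ 2 ≤ A := by rw [div_pow, sq_sqrt (by linarith)]; linarith
  have hrpow : (√A / 2) ^ (-s) = 2 ^ s * A ^ (-(s / 2)) := by
    rw [div_rpow (sqrt_nonneg A) zero_le_two, sqrt_eq_rpow, ← rpow_mul (by linarith),
      rpow_neg zero_le_two, div_inv_eq_mul, mul_comm]
    ring_nf
  calc ∫ z, (1 + ‖x - z‖ ^ 2) ^ (-p) * ‖z‖ ^ (-s) ∂μ ≤ (√A / 2) ^ (-s) * K :=
        integral_one_add_norm_sub_sq_rpow_mul_norm_rpow_le hs0 hs hp hr hrx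
    _ ≤ (2 ^ s * K + 1) * A ^ (-(s / 2)) := by
        rw [hrpow]
        have := rpow_pos_of_pos (by linarith : (0 : ℝ) < A) (-(s / 2))
        nlinarith

theorem exists_one_add_norm_sq_rpow_mul_abs_integral_mul_norm_sub_rpow_le {s p : ℝ} (hs0 : 0 ≤ s)
    (hs : s < finrank ℝ E) (hp : (finrank ℝ E : ℝ) / 2 < p) :
    ∃ C > 0, ∀ g : E → ℝ, ∀ M : ℝ, (∀ y, (1 + ‖y‖ ^ 2) ^ p * |g y| ≤ M) → ∀ x : E,
      (1 + ‖x‖ ^ 2) ^ (s / 2) * |∫ y, g y * ‖x - y‖ ^ (-s) ∂μ| ≤ C * M := by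
  obtain ⟨C, hC, hbound⟩ :=
    exists_integral_one_add_norm_sub_sq_rpow_mul_norm_rpow_le (μ := μ) hs0 hs hp
  refine ⟨C, hC, fun g M hM x => ?_⟩
  have hM0 : 0 ≤ M := (by positivity : (0 : ℝ) ≤ (1 + ‖(0 : E)‖ ^ 2) ^ p * |g 0|).trans (hM 0)
  have hg : ∀ y, |g y| ≤ M * (1 + ‖y‖ ^ 2) ^ (-p) := fun y => by
    rw [rpow_neg (by positivity), ← div_eq_mul_inv, le_div_iff₀ (by positivity), mul_comm]
    exact hM y
  have hpotential : |∫ y, g y * ‖x - y‖ ^ (-s) ∂μ| ≤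
      M * ∫ z, (1 + ‖x - z‖ ^ 2) ^ (-p) * ‖z‖ ^ (-s) ∂μ := by
    rw [← integral_sub_left_eq_self _ μ x, ← integral_const_mul]
    simp only [sub_sub_cancel, ← norm_eq_abs]
    refine norm_integral_le_of_norm_le
      ((integrable_one_add_norm_sub_sq_rpow_mul_norm_rpow hs0 hs hp x).const_mul M)
      (Filter.Eventually.of_forall fun z => ?_)
    rw [norm_mul, norm_of_nonneg (by positivity : 0 ≤ ‖z‖ ^ (-s)), ← mul_assoc]
    exact mul_le_mul_of_nonneg_right (hg (x - z)) (by positivity)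
  have hA : 0 < 1 + ‖x‖ ^ 2 := by positivity
  calc (1 + ‖x‖ ^ 2) ^ (s / 2) * |∫ y, g y * ‖x - y‖ ^ (-s) ∂μ|
      ≤ (1 + ‖x‖ ^ 2) ^ (s / 2) * (M * (C * (1 + ‖x‖ ^ 2) ^ (-(s / 2)))) := by
        gcongr
        exact hpotential.trans (mul_le_mul_of_nonneg_left (hbound x) hM0)
    _ = C * M := by
        rw [rpow_neg hA.le]
        field_simp

theorem stmt9 (N : ℕ) (hN : 3 ≤ N) :
    ∃ C > 0, ∀ g : EuclideanSpace ℝ (Fin N) → ℝ, Continuous g →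
      ∀ M : ℝ, (∀ x, (1 + ‖x‖ ^ 2) ^ (((N : ℝ) + 2) / 2) * |g x| ≤ M) →
        ∀ x : EuclideanSpace ℝ (Fin N),
          (1 + ‖x‖ ^ 2) ^ (((N : ℝ) - 2) / 2) *
            |((N : ℝ) * ((N : ℝ) - 2) *
                (2 * π ^ ((N : ℝ) / 2) / ((N : ℝ) * Gamma ((N : ℝ) / 2))))⁻¹ *
              ∫ y : EuclideanSpace ℝ (Fin N), g y * ‖x - y‖ ^ (-((N : ℝ) - 2))|
            ≤ C * M := by
  have hN3 : (3 : ℝ) ≤ N := by exact_mod_cast hN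
  obtain ⟨C, hC, hbound⟩ :=
    exists_one_add_norm_sq_rpow_mul_abs_integral_mul_norm_sub_rpow_le
      (μ := (volume : Measure (EuclideanSpace ℝ (Fin N)))) (s := (N : ℝ) - 2)
      (p := ((N : ℝ) + 2) / 2) (by linarith) (by rw [finrank_euclideanSpace_fin]; linarith)
      (by rw [finrank_euclideanSpace_fin]; linarith)
  set c := (N : ℝ) * ((N : ℝ) - 2) * (2 * π ^ ((N : ℝ) / 2) / ((N : ℝ) * Gamma ((N : ℝ) / 2)))
  have hc : 0 < c := by
    have := Gamma_pos_of_pos (by positivity : (0 : ℝ) < N / 2)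
    have : (0 : ℝ) < N - 2 := by linarith
    positivity
  refine ⟨c⁻¹ * C, by positivity, fun g _ M hM x => ?_⟩
  rw [abs_mul, abs_of_pos (inv_pos.2 hc), mul_left_comm, mul_assoc]
  exact mul_le_mul_of_nonneg_left (hbound g M hM x) (inv_nonneg.2 hc.le)
end

section
/- Let N ≥ 3, U_{μ,ξ}(x) = μ^{−(N−2)/2}(1+|x−ξ|²/μ²)^{−(N−2)/2}. Fix (μ₀,ξ₀) ∈ (0,∞)×ℝ^N. Then as (μ,ξ) → (μ₀,ξ₀), uniformly in x: U_{μ,ξ}(x) = U_{μ₀,ξ₀}(x) + Z_{0;μ₀,ξ₀}(x)(μ−μ₀)/μ₀ + Σ_{j=1}^N Z_{j;μ₀,ξ₀}(x)(ξ_j−ξ_{0j})/μ₀ + U_{μ₀,ξ₀}(x)·O(|μ−μ₀|²/μ₀² + |ξ−ξ₀|²/μ₀²), where Z_{j;μ₀,ξ₀}(x) = μ₀^{−(N−2)/2} Z_j((x−ξ₀)/μ₀). -/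
open MeasureTheory Real

/-- The bubble `U_{μ,ξ}`. -/
noncomputable def Ubub {N : ℕ} (μ : ℝ) (ξ x : EuclideanSpace ℝ (Fin N)) : ℝ :=
  μ ^ (-(((N : ℝ) - 2) / 2)) * (1 + ‖x - ξ‖ ^ 2 / μ ^ 2) ^ (-(((N : ℝ) - 2) / 2))

/-- `Z₀`. -/
noncomputable def Zzero {N : ℕ} (y : EuclideanSpace ℝ (Fin N)) : ℝ :=
  ((N : ℝ) - 2) / 2 * (‖y‖ ^ 2 - 1) * (1 + ‖y‖ ^ 2) ^ (-((N : ℝ) / 2))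

/-- `Z_j` for `j = 1,…,N`. -/
noncomputable def Zcoord {N : ℕ} (j : Fin N) (y : EuclideanSpace ℝ (Fin N)) : ℝ :=
  ((N : ℝ) - 2) * y j * (1 + ‖y‖ ^ 2) ^ (-((N : ℝ) / 2))

/-!
With `p = (N - 2) / 2` the bubble is `U_{μ,ξ}(x) = μ ^ p * (μ ^ 2 + ‖x - ξ‖ ^ 2) ^ (-p)`.
Restrict it to the segment `t ↦ (μ₀ + t (μ - μ₀), ξ₀ + t (ξ - ξ₀))`, `t ∈ [0, 1]`: it becomes
`F = m ^ p * Q ^ (-p)` with `m` affine and `Q = m ^ 2 + ‖x - ξ₀ - t (ξ - ξ₀)‖ ^ 2` quadratic in `t`,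
so `F' = p F L` with `L = m'/m - Q'/Q`, and `F'(0)` is exactly the `Z`-term of the expansion.
Then `F'' = p F (p L ^ 2 + L')`. By Cauchy–Schwarz in `ℝ × ℝ^N`,
`Q' ^ 2 ≤ 4 Q ε` with `ε = (μ - μ₀) ^ 2 + ‖ξ - ξ₀‖ ^ 2`, and `Q'' = 2 ε`. For `(μ, ξ)` within
`μ₀ / 4` of `(μ₀, ξ₀)` we have `m ≈ μ₀` and `Q ≥ (μ₀ ^ 2 + ‖x - ξ₀‖ ^ 2) / 2`, which give
`L ^ 2, |L'| = O(ε / μ₀ ^ 2)` and `F ≤ (5/2) ^ p F(0) = (5/2) ^ p U_{μ₀,ξ₀}(x)`.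
Taylor's formula at order two along the segment concludes.
-/

open Set

theorem abs_sub_sub_deriv_le_of_abs_deriv2_le {f f' f'' : ℝ → ℝ} {C : ℝ}
    (hf : ∀ t ∈ Icc (0 : ℝ) 1, HasDerivAt f (f' t) t)
    (hf' : ∀ t ∈ Icc (0 : ℝ) 1, HasDerivAt f' (f'' t) t)
    (hC : ∀ t ∈ Icc (0 : ℝ) 1, |f'' t| ≤ C) :
    |f 1 - f 0 - f' 0| ≤ C := by
  have h0 : (0 : ℝ) ∈ Icc (0 : ℝ) 1 := by norm_num
  have h1 : (1 : ℝ) ∈ Icc (0 : ℝ) 1 := by norm_num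
  have hf'_lip : ∀ t ∈ Icc (0 : ℝ) 1, ‖f' t - f' 0‖ ≤ C := fun t ht => by
    have := (convex_Icc (0 : ℝ) 1).norm_image_sub_le_of_norm_hasDerivWithin_le
      (fun s hs => (hf' s hs).hasDerivWithinAt) (fun s hs => hC s hs) h0 ht
    have hC0 : 0 ≤ C := (abs_nonneg _).trans (hC 0 h0)
    simp only [Real.norm_eq_abs, sub_zero, abs_of_nonneg ht.1] at this ⊢
    nlinarith [ht.2]
  have := (convex_Icc (0 : ℝ) 1).norm_image_sub_le_of_norm_hasDerivWithin_le
    (f := fun t => f t - t * f' 0)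
    (fun s hs => ((hf s hs).sub (hasDerivAt_mul_const (f' 0))).hasDerivWithinAt) hf'_lip h0 h1
  simp only [Real.norm_eq_abs] at this
  convert this using 2 <;> ring_nf

theorem HasDerivAt.rpow_mul_rpow_neg {m Q : ℝ → ℝ} {m' Q' p t : ℝ}
    (hm : HasDerivAt m m' t) (hQ : HasDerivAt Q Q' t) (hm0 : 0 < m t) (hQ0 : 0 < Q t) :
    HasDerivAt (fun t => m t ^ p * Q t ^ (-p))
      (p * (m t ^ p * Q t ^ (-p)) * (m' / m t - Q' / Q t)) t := by
  refine ((hm.rpow_const (p := p) (Or.inl hm0.ne')).mul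
    (hQ.rpow_const (p := -p) (Or.inl hQ0.ne'))).congr_deriv ?_
  rw [rpow_sub_one hm0.ne', rpow_sub_one hQ0.ne']
  field_simp
  ring

theorem one_add_div_sq_rpow_neg {μ s : ℝ} (hμ : 0 < μ) (hs : 0 ≤ s) (q : ℝ) :
    (1 + s / μ ^ 2) ^ (-q) = (μ ^ q) ^ 2 * (μ ^ 2 + s) ^ (-q) := by
  rw [show 1 + s / μ ^ 2 = (μ ^ 2 + s) / μ ^ 2 by field_simp, div_rpow (by positivity)
    (by positivity), rpow_neg (sq_nonneg μ) q, rpow_pow_comm hμ.le]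
  field_simp

namespace BubbleSegment

variable {E : Type*} [NormedAddCommGroup E] [InnerProductSpace ℝ E] (μ₀ dμ : ℝ) (v w : E)

-- `dμ`, `v`, `w` stand for `μ - μ₀`, `x - ξ₀`, `ξ - ξ₀`.
noncomputable def denom (t : ℝ) : ℝ := (μ₀ + t * dμ) ^ 2 + ‖v - t • w‖ ^ 2

noncomputable def denomDeriv (t : ℝ) : ℝ := 2 * ((μ₀ + t * dμ) * dμ - inner ℝ (v - t • w) w)

noncomputable def bubble (p t : ℝ) : ℝ := (μ₀ + t * dμ) ^ p * denom μ₀ dμ v w t ^ (-p)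

noncomputable def bubbleLogDeriv (t : ℝ) : ℝ :=
  dμ / (μ₀ + t * dμ) - denomDeriv μ₀ dμ v w t / denom μ₀ dμ v w t

noncomputable def bubbleLogDeriv' (t : ℝ) : ℝ :=
  -(dμ / (μ₀ + t * dμ)) ^ 2 - 2 * (dμ ^ 2 + ‖w‖ ^ 2) / denom μ₀ dμ v w t
    + (denomDeriv μ₀ dμ v w t / denom μ₀ dμ v w t) ^ 2

theorem hasDerivAt_scale (t : ℝ) : HasDerivAt (fun t => μ₀ + t * dμ) dμ t := by
  simpa using ((hasDerivAt_id t).mul_const dμ).const_add μ₀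

theorem hasDerivAt_denom (t : ℝ) :
    HasDerivAt (denom μ₀ dμ v w) (denomDeriv μ₀ dμ v w t) t := by
  have hu : HasDerivAt (fun t : ℝ => v - t • w) (-w) t := by
    simpa using ((hasDerivAt_id t).smul_const w).const_sub v
  refine (((hasDerivAt_scale μ₀ dμ t).pow 2).add hu.norm_sq).congr_deriv ?_
  simp only [denomDeriv, inner_neg_right]
  ring

theorem hasDerivAt_denomDeriv (t : ℝ) :
    HasDerivAt (denomDeriv μ₀ dμ v w) (2 * (dμ ^ 2 + ‖w‖ ^ 2)) t := by
  have hu : HasDerivAt (fun t : ℝ => v - t • w) (-w) t := by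
    simpa using ((hasDerivAt_id t).smul_const w).const_sub v
  refine ((((hasDerivAt_scale μ₀ dμ t).mul_const dμ).sub
    (hu.inner ℝ (hasDerivAt_const t w))).const_mul 2).congr_deriv ?_
  simp only [inner_zero_right, inner_neg_left, real_inner_self_eq_norm_sq]
  ring

theorem denomDeriv_sq_le (t : ℝ) :
    denomDeriv μ₀ dμ v w t ^ 2 ≤ 4 * denom μ₀ dμ v w t * (dμ ^ 2 + ‖w‖ ^ 2) := by
  have hcs := abs_real_inner_le_norm (v - t • w) w
  have hcs' : |(μ₀ + t * dμ) * dμ - inner ℝ (v - t • w) w|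
      ≤ |μ₀ + t * dμ| * |dμ| + ‖v - t • w‖ * ‖w‖ := by
    rw [← abs_mul]; exact (abs_sub _ _).trans (by gcongr)
  have hsq := sq_le_sq' (neg_le_of_abs_le hcs') (le_of_abs_le hcs')
  simp only [denomDeriv, denom]
  nlinarith [sq_nonneg (|μ₀ + t * dμ| * ‖w‖ - ‖v - t • w‖ * |dμ|), sq_abs (μ₀ + t * dμ),
    sq_abs dμ]

variable {μ₀ dμ v w}

theorem hasDerivAt_bubble (p : ℝ) {t : ℝ} (hm : 0 < μ₀ + t * dμ) (hQ : 0 < denom μ₀ dμ v w t) :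
    HasDerivAt (bubble μ₀ dμ v w p) (p * bubble μ₀ dμ v w p t * bubbleLogDeriv μ₀ dμ v w t) t :=
  (hasDerivAt_scale μ₀ dμ t).rpow_mul_rpow_neg (hasDerivAt_denom μ₀ dμ v w t) hm hQ

theorem hasDerivAt_bubbleLogDeriv {t : ℝ} (hm : 0 < μ₀ + t * dμ)
    (hQ : 0 < denom μ₀ dμ v w t) :
    HasDerivAt (bubbleLogDeriv μ₀ dμ v w) (bubbleLogDeriv' μ₀ dμ v w t) t := by
  unfold bubbleLogDeriv'
  refine (((hasDerivAt_const t dμ).div (hasDerivAt_scale μ₀ dμ t) hm.ne').sub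
    ((hasDerivAt_denomDeriv μ₀ dμ v w t).div (hasDerivAt_denom μ₀ dμ v w t) hQ.ne')).congr_deriv
    ?_
  field_simp
  ring

theorem hasDerivAt_deriv_bubble (p : ℝ) {t : ℝ} (hm : 0 < μ₀ + t * dμ)
    (hQ : 0 < denom μ₀ dμ v w t) :
    HasDerivAt (fun t => p * bubble μ₀ dμ v w p t * bubbleLogDeriv μ₀ dμ v w t)
      (p * bubble μ₀ dμ v w p t *
        (p * bubbleLogDeriv μ₀ dμ v w t ^ 2 + bubbleLogDeriv' μ₀ dμ v w t)) t := by
  refine (((hasDerivAt_bubble p hm hQ).const_mul p).mul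
    (hasDerivAt_bubbleLogDeriv hm hQ)).congr_deriv ?_
  ring

theorem denom_zero : denom μ₀ dμ v w 0 = μ₀ ^ 2 + ‖v‖ ^ 2 := by simp [denom]

theorem denomDeriv_zero : denomDeriv μ₀ dμ v w 0 = 2 * (μ₀ * dμ - inner ℝ v w) := by
  simp [denomDeriv]

theorem bubble_zero (p : ℝ) : bubble μ₀ dμ v w p 0 = μ₀ ^ p * (μ₀ ^ 2 + ‖v‖ ^ 2) ^ (-p) := by
  simp [bubble, denom_zero]

section Bounds

variable (v) {t : ℝ} (hμ₀ : 0 < μ₀) (hdμ : |dμ| ≤ μ₀ / 4) (hw : ‖w‖ ≤ μ₀ / 4)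
  (ht : t ∈ Icc (0 : ℝ) 1)
include hμ₀ hdμ ht

theorem scale_mem_Icc : μ₀ + t * dμ ∈ Icc (3 * μ₀ / 4) (5 * μ₀ / 4) := by
  have := abs_le.mp hdμ
  constructor <;> nlinarith [ht.1, ht.2]

theorem sq_div_scale_le : (dμ / (μ₀ + t * dμ)) ^ 2 ≤ 2 * (dμ ^ 2 / μ₀ ^ 2) := by
  have hm := (scale_mem_Icc hμ₀ hdμ ht).1
  rw [div_pow, mul_div_assoc', div_le_div_iff₀ (by nlinarith) (by positivity)]
  nlinarith [mul_le_mul_of_nonneg_left (pow_le_pow_left₀ (by positivity) hm 2) (sq_nonneg dμ)]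

include hw

theorem le_denom : (μ₀ ^ 2 + ‖v‖ ^ 2) / 2 ≤ denom μ₀ dμ v w t := by
  have hm := (scale_mem_Icc hμ₀ hdμ ht).1
  have htw : ‖t • w‖ ≤ μ₀ / 4 := by
    rw [norm_smul, Real.norm_of_nonneg ht.1]
    nlinarith [ht.2, norm_nonneg w]
  have hv : ‖v‖ ≤ ‖v - t • w‖ + μ₀ / 4 := by
    simpa using (norm_le_norm_add_norm_sub' v (t • w)).trans (by rw [add_comm]; gcongr)
  have hv2 := pow_le_pow_left₀ (norm_nonneg v) hv 2
  have hm2 := pow_le_pow_left₀ (by positivity) hm 2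
  simp only [denom]
  nlinarith [sq_nonneg (‖v - t • w‖ - μ₀ / 4)]

theorem denom_pos : 0 < denom μ₀ dμ v w t :=
  lt_of_lt_of_le (by positivity) (le_denom v hμ₀ hdμ hw ht)

theorem bubble_le {p : ℝ} (hp : 0 ≤ p) :
    bubble μ₀ dμ v w p t ≤ (5 / 2) ^ p * bubble μ₀ dμ v w p 0 := by
  have hA : 0 < μ₀ ^ 2 + ‖v‖ ^ 2 := by positivity
  have hm := scale_mem_Icc hμ₀ hdμ ht
  calc bubble μ₀ dμ v w p t
      ≤ (5 / 4 * μ₀) ^ p * ((μ₀ ^ 2 + ‖v‖ ^ 2) / 2) ^ (-p) := by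
        refine mul_le_mul (rpow_le_rpow (by linarith [hm.1]) (by linarith [hm.2]) hp)
          (rpow_le_rpow_of_nonpos (by positivity) (le_denom v hμ₀ hdμ hw ht) (by linarith))
          (rpow_nonneg (denom_pos v hμ₀ hdμ hw ht).le _) (by positivity)
    _ = (5 / 2) ^ p * bubble μ₀ dμ v w p 0 := by
        rw [bubble_zero, mul_rpow (by norm_num) hμ₀.le, div_rpow hA.le (by norm_num),
          rpow_neg (by norm_num : (0 : ℝ) ≤ 2), show (5 / 2 : ℝ) = 5 / 4 * 2 by norm_num,
          mul_rpow (by norm_num) (by norm_num)]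
        field_simp

theorem div_denom_le :
    (dμ ^ 2 + ‖w‖ ^ 2) / denom μ₀ dμ v w t ≤ 2 * ((dμ ^ 2 + ‖w‖ ^ 2) / μ₀ ^ 2) := by
  rw [mul_div_assoc', div_le_div_iff₀ (denom_pos v hμ₀ hdμ hw ht) (by positivity)]
  nlinarith [le_denom v hμ₀ hdμ hw ht,
    mul_nonneg (add_nonneg (sq_nonneg dμ) (sq_nonneg ‖w‖)) (sq_nonneg ‖v‖)]

theorem sq_denomDeriv_div_denom_le :
    (denomDeriv μ₀ dμ v w t / denom μ₀ dμ v w t) ^ 2 ≤ 8 * ((dμ ^ 2 + ‖w‖ ^ 2) / μ₀ ^ 2) := by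
  have hQ := denom_pos v hμ₀ hdμ hw ht
  calc (denomDeriv μ₀ dμ v w t / denom μ₀ dμ v w t) ^ 2
      ≤ 4 * denom μ₀ dμ v w t * (dμ ^ 2 + ‖w‖ ^ 2) / denom μ₀ dμ v w t ^ 2 := by
        rw [div_pow]; gcongr; exact denomDeriv_sq_le μ₀ dμ v w t
    _ = 4 * ((dμ ^ 2 + ‖w‖ ^ 2) / denom μ₀ dμ v w t) := by field_simp
    _ ≤ 8 * ((dμ ^ 2 + ‖w‖ ^ 2) / μ₀ ^ 2) := by linarith [div_denom_le v hμ₀ hdμ hw ht]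

theorem bubbleLogDeriv_sq_le :
    bubbleLogDeriv μ₀ dμ v w t ^ 2 ≤ 20 * ((dμ ^ 2 + ‖w‖ ^ 2) / μ₀ ^ 2) := by
  have hw2 : dμ ^ 2 / μ₀ ^ 2 ≤ (dμ ^ 2 + ‖w‖ ^ 2) / μ₀ ^ 2 := by gcongr; nlinarith
  unfold bubbleLogDeriv
  nlinarith [sq_div_scale_le hμ₀ hdμ ht, sq_denomDeriv_div_denom_le v hμ₀ hdμ hw ht,
    sq_nonneg (dμ / (μ₀ + t * dμ) + denomDeriv μ₀ dμ v w t / denom μ₀ dμ v w t)]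

theorem abs_bubbleLogDeriv'_le :
    |bubbleLogDeriv' μ₀ dμ v w t| ≤ 14 * ((dμ ^ 2 + ‖w‖ ^ 2) / μ₀ ^ 2) := by
  have ha := sq_div_scale_le hμ₀ hdμ ht
  have hw2 : dμ ^ 2 / μ₀ ^ 2 ≤ (dμ ^ 2 + ‖w‖ ^ 2) / μ₀ ^ 2 := by gcongr; nlinarith
  have hb := div_denom_le v hμ₀ hdμ hw ht
  have hc := sq_denomDeriv_div_denom_le v hμ₀ hdμ hw ht
  have hb0 : 0 ≤ (dμ ^ 2 + ‖w‖ ^ 2) / denom μ₀ dμ v w t :=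
    div_nonneg (by positivity) (denom_pos v hμ₀ hdμ hw ht).le
  unfold bubbleLogDeriv'
  rw [abs_le, mul_div_assoc]
  constructor <;> nlinarith [sq_nonneg (dμ / (μ₀ + t * dμ)),
    sq_nonneg (denomDeriv μ₀ dμ v w t / denom μ₀ dμ v w t)]

end Bounds

theorem abs_bubble_sub_sub_le {p : ℝ} (hp : 0 ≤ p) (hμ₀ : 0 < μ₀) (hdμ : |dμ| ≤ μ₀ / 4)
    (hw : ‖w‖ ≤ μ₀ / 4) :
    |bubble μ₀ dμ v w p 1 - bubble μ₀ dμ v w p 0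
        - p * bubble μ₀ dμ v w p 0 * bubbleLogDeriv μ₀ dμ v w 0|
      ≤ p * (20 * p + 14) * (5 / 2) ^ p * bubble μ₀ dμ v w p 0 *
          ((dμ ^ 2 + ‖w‖ ^ 2) / μ₀ ^ 2) := by
  have hm : ∀ t ∈ Icc (0 : ℝ) 1, 0 < μ₀ + t * dμ := fun t ht =>
    lt_of_lt_of_le (by positivity) (scale_mem_Icc hμ₀ hdμ ht).1
  refine abs_sub_sub_deriv_le_of_abs_deriv2_le
    (fun t ht => hasDerivAt_bubble p (hm t ht) (denom_pos v hμ₀ hdμ hw ht))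
    (fun t ht => hasDerivAt_deriv_bubble p (hm t ht) (denom_pos v hμ₀ hdμ hw ht)) fun t ht => ?_
  have hF : 0 ≤ bubble μ₀ dμ v w p t :=
    mul_nonneg (rpow_nonneg (hm t ht).le _) (rpow_nonneg (denom_pos v hμ₀ hdμ hw ht).le _)
  have hL := bubbleLogDeriv_sq_le v hμ₀ hdμ hw ht
  have hL' := abs_bubbleLogDeriv'_le v hμ₀ hdμ hw ht
  calc |p * bubble μ₀ dμ v w p t *
        (p * bubbleLogDeriv μ₀ dμ v w t ^ 2 + bubbleLogDeriv' μ₀ dμ v w t)|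
      ≤ p * bubble μ₀ dμ v w p t * (p * bubbleLogDeriv μ₀ dμ v w t ^ 2
          + |bubbleLogDeriv' μ₀ dμ v w t|) := by
        rw [abs_mul, abs_of_nonneg (by positivity)]
        gcongr
        exact (abs_add_le _ _).trans (by rw [abs_of_nonneg (by positivity)])
    _ ≤ p * ((5 / 2) ^ p * bubble μ₀ dμ v w p 0) *
          (p * (20 * ((dμ ^ 2 + ‖w‖ ^ 2) / μ₀ ^ 2)) + 14 * ((dμ ^ 2 + ‖w‖ ^ 2) / μ₀ ^ 2)) := by
        have hF_le := bubble_le v hμ₀ hdμ hw ht hp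
        gcongr
        exact mul_nonneg hp (hF.trans hF_le)
    _ = _ := by ring

end BubbleSegment

section Ubub

open BubbleSegment

variable {N : ℕ}

theorem Ubub_eq {μ : ℝ} (hμ : 0 < μ) (ξ x : EuclideanSpace ℝ (Fin N)) :
    Ubub μ ξ x = μ ^ (((N : ℝ) - 2) / 2) * (μ ^ 2 + ‖x - ξ‖ ^ 2) ^ (-(((N : ℝ) - 2) / 2)) := by
  rw [Ubub, one_add_div_sq_rpow_neg hμ (by positivity), rpow_neg hμ.le]
  field_simp

theorem Ubub_eq_bubble_zero {μ₀ : ℝ} (hμ₀ : 0 < μ₀) (dμ : ℝ)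
    (ξ₀ x w : EuclideanSpace ℝ (Fin N)) :
    Ubub μ₀ ξ₀ x = bubble μ₀ dμ (x - ξ₀) w (((N : ℝ) - 2) / 2) 0 := by
  rw [Ubub_eq hμ₀, bubble_zero]

theorem Ubub_eq_bubble_one {μ₀ μ : ℝ} (hμ : 0 < μ) (ξ₀ ξ x : EuclideanSpace ℝ (Fin N)) :
    Ubub μ ξ x = bubble μ₀ (μ - μ₀) (x - ξ₀) (ξ - ξ₀) (((N : ℝ) - 2) / 2) 1 := by
  rw [Ubub_eq hμ, bubble, denom]
  congr 3 <;> simp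

theorem sum_Zcoord_mul (y w : EuclideanSpace ℝ (Fin N)) :
    ∑ j, Zcoord j y * w j = ((N : ℝ) - 2) * inner ℝ y w * (1 + ‖y‖ ^ 2) ^ (-((N : ℝ) / 2)) := by
  simp only [Zcoord, PiLp.inner_apply, RCLike.inner_apply, conj_trivial, Finset.mul_sum,
    Finset.sum_mul]
  exact Finset.sum_congr rfl fun j _ => by ring

theorem Zzero_add_sum_Zcoord_eq {μ₀ : ℝ} (hμ₀ : 0 < μ₀) (dμ : ℝ) (v w : EuclideanSpace ℝ (Fin N)) :
    μ₀ ^ (-(((N : ℝ) - 2) / 2)) * Zzero (μ₀⁻¹ • v) * (dμ / μ₀) +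
        ∑ j, μ₀ ^ (-(((N : ℝ) - 2) / 2)) * Zcoord j (μ₀⁻¹ • v) * (w j / μ₀)
      = ((N : ℝ) - 2) / 2 * bubble μ₀ dμ v w (((N : ℝ) - 2) / 2) 0 *
          bubbleLogDeriv μ₀ dμ v w 0 := by
  set p := ((N : ℝ) - 2) / 2 with hp
  have hsum : ∑ j, μ₀ ^ (-p) * Zcoord j (μ₀⁻¹ • v) * (w j / μ₀)
      = μ₀ ^ (-p) / μ₀ * ∑ j, Zcoord j (μ₀⁻¹ • v) * w j := by
    rw [Finset.mul_sum]
    exact Finset.sum_congr rfl fun j _ => by ring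
  have hN : (N : ℝ) / 2 = p + 1 := by rw [hp]; ring
  have hy : ‖μ₀⁻¹ • v‖ ^ 2 = ‖v‖ ^ 2 / μ₀ ^ 2 := by
    rw [norm_smul, Real.norm_of_nonneg (inv_nonneg.mpr hμ₀.le)]
    field_simp
  have hA : 0 < μ₀ ^ 2 + ‖v‖ ^ 2 := by positivity
  rw [hsum, sum_Zcoord_mul, Zzero, hy, real_inner_smul_left, hN,
    one_add_div_sq_rpow_neg hμ₀ (by positivity), bubble_zero, bubbleLogDeriv, zero_mul,
    add_zero, denom_zero, denomDeriv_zero, rpow_neg hμ₀.le, rpow_add_one hμ₀.ne', neg_add',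
    rpow_sub_one hA.ne', show (N : ℝ) - 2 = 2 * p by rw [hp]; ring]
  have := hμ₀.ne'
  field_simp
  ring

end Ubub

theorem stmt14 (N : ℕ) (hN : 3 ≤ N) (μ₀ : ℝ) (hμ₀ : 0 < μ₀)
    (ξ₀ : EuclideanSpace ℝ (Fin N)) :
    ∃ C > 0, ∃ δ > 0, ∀ μ : ℝ, 0 < μ → |μ - μ₀| < δ →
      ∀ ξ : EuclideanSpace ℝ (Fin N), ‖ξ - ξ₀‖ < δ →
        ∀ x : EuclideanSpace ℝ (Fin N),
          |Ubub μ ξ x - Ubub μ₀ ξ₀ x -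
              μ₀ ^ (-(((N : ℝ) - 2) / 2)) * Zzero (μ₀⁻¹ • (x - ξ₀)) * ((μ - μ₀) / μ₀) -
              ∑ j : Fin N,
                μ₀ ^ (-(((N : ℝ) - 2) / 2)) * Zcoord j (μ₀⁻¹ • (x - ξ₀)) *
                  ((ξ j - ξ₀ j) / μ₀)|
            ≤ C * Ubub μ₀ ξ₀ x *
                ((μ - μ₀) ^ 2 / μ₀ ^ 2 + ‖ξ - ξ₀‖ ^ 2 / μ₀ ^ 2) := by
  set p := ((N : ℝ) - 2) / 2 with hp_def
  have hp : 0 < p := by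
    have : (3 : ℝ) ≤ N := by exact_mod_cast hN
    rw [hp_def]; linarith
  refine ⟨p * (20 * p + 14) * (5 / 2) ^ p, by positivity, μ₀ / 4, by positivity,
    fun μ hμ hdμ ξ hξ x => ?_⟩
  have hZ := Zzero_add_sum_Zcoord_eq hμ₀ (μ - μ₀) (x - ξ₀) (ξ - ξ₀)
  simp only [PiLp.sub_apply] at hZ
  rw [Ubub_eq_bubble_one hμ ξ₀, Ubub_eq_bubble_zero hμ₀ (μ - μ₀) ξ₀ x (ξ - ξ₀), sub_sub, hZ]
  refine (BubbleSegment.abs_bubble_sub_sub_le hp.le hμ₀ hdμ.le hξ.le).trans_eq ?_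
  ring
end

section
/- For ν → 1 and ζ → 0 in ℝ^N (N ≥ 3), the quantity ν + |y−ζ|²/ν satisfies ν + |y−ζ|²/ν = (1+|y|²)(1 − (ν−1)(|y|²−1)/(1+|y|²) − 2(ζ·y)/(1+|y|²) + O((ν−1)² + |ζ|²/(1+|y|²))), where the O-constant is uniform in y ∈ ℝ^N. -/
open MeasureTheory Real

/-
The error term is exactly `‖(ν - 1) • y + ζ‖² / ν`, as expanding both sides shows. Since
`‖u + v‖² ≤ 2 (‖u‖² + ‖v‖²)` and `1 / ν < 2` for `ν > 1/2`, it is at most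
`4 ((ν - 1)² ‖y‖² + ‖ζ‖²) ≤ 4 (1 + ‖y‖²) ((ν - 1)² + ‖ζ‖² / (1 + ‖y‖²))`, uniformly in `y`.
-/

theorem norm_add_sq_le_two_mul {E : Type*} [SeminormedAddGroup E] (u v : E) :
    ‖u + v‖ ^ 2 ≤ 2 * (‖u‖ ^ 2 + ‖v‖ ^ 2) :=
  (pow_le_pow_left₀ (norm_nonneg _) (norm_add_le u v) 2).trans add_sq_le

section InnerProductSpace

variable {E : Type*} [NormedAddCommGroup E] [InnerProductSpace ℝ E]

theorem add_norm_sub_sq_div_sub_eq_norm_sq_div {ν : ℝ} (hν : ν ≠ 0) (ζ y : E) :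
    ν + ‖y - ζ‖ ^ 2 / ν -
        (1 + ‖y‖ ^ 2) *
          (1 - (ν - 1) * (‖y‖ ^ 2 - 1) / (1 + ‖y‖ ^ 2) - 2 * inner ℝ ζ y / (1 + ‖y‖ ^ 2))
      = ‖(ν - 1) • y + ζ‖ ^ 2 / ν := by
  have hy : (1 + ‖y‖ ^ 2) ≠ 0 := by positivity
  rw [norm_sub_sq_real, norm_add_sq_real, norm_smul, real_inner_smul_left, real_inner_comm,
    Real.norm_eq_abs, mul_pow, sq_abs]
  field_simp
  ring

theorem norm_sub_one_smul_add_sq_div_le {ν : ℝ} (hν : 1 / 2 < ν) (ζ y : E) :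
    ‖(ν - 1) • y + ζ‖ ^ 2 / ν
      ≤ (1 + ‖y‖ ^ 2) * 4 * ((ν - 1) ^ 2 + ‖ζ‖ ^ 2 / (1 + ‖y‖ ^ 2)) := by
  have hy : (0 : ℝ) < 1 + ‖y‖ ^ 2 := by positivity
  have hsplit : ‖(ν - 1) • y + ζ‖ ^ 2 ≤ 2 * ((ν - 1) ^ 2 * ‖y‖ ^ 2 + ‖ζ‖ ^ 2) := by
    simpa only [norm_smul, Real.norm_eq_abs, mul_pow, sq_abs] using
      norm_add_sq_le_two_mul ((ν - 1) • y) ζ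
  have hrhs : (1 + ‖y‖ ^ 2) * 4 * ((ν - 1) ^ 2 + ‖ζ‖ ^ 2 / (1 + ‖y‖ ^ 2))
      = 4 * ((ν - 1) ^ 2 * (1 + ‖y‖ ^ 2) + ‖ζ‖ ^ 2) := by
    field_simp
  rw [hrhs, div_le_iff₀ (by linarith)]
  nlinarith [sq_nonneg (ν - 1), sq_nonneg ‖y‖, sq_nonneg ‖(ν - 1) • y + ζ‖]

end InnerProductSpace

theorem stmt15_general (N : ℕ) :
    ∃ C > 0, ∃ δ > 0, ∀ ν : ℝ, 0 < ν → |ν - 1| < δ →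
      ∀ ζ : EuclideanSpace ℝ (Fin N), ‖ζ‖ < δ →
        ∀ y : EuclideanSpace ℝ (Fin N),
          |ν + ‖y - ζ‖ ^ 2 / ν -
              (1 + ‖y‖ ^ 2) *
                (1 - (ν - 1) * (‖y‖ ^ 2 - 1) / (1 + ‖y‖ ^ 2) -
                  2 * (inner ℝ ζ y : ℝ) / (1 + ‖y‖ ^ 2))|
            ≤ (1 + ‖y‖ ^ 2) * C * ((ν - 1) ^ 2 + ‖ζ‖ ^ 2 / (1 + ‖y‖ ^ 2)) := by
  refine ⟨4, by norm_num, 1 / 2, by norm_num, fun ν hν hνδ ζ _ y => ?_⟩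
  have hν_half : 1 / 2 < ν := by linarith [(abs_lt.mp hνδ).1]
  rw [add_norm_sub_sq_div_sub_eq_norm_sq_div hν.ne', abs_of_nonneg (by positivity)]
  exact norm_sub_one_smul_add_sq_div_le hν_half ζ y

theorem stmt15 (N : ℕ) (hN : 3 ≤ N) :
    ∃ C > 0, ∃ δ > 0, ∀ ν : ℝ, 0 < ν → |ν - 1| < δ →
      ∀ ζ : EuclideanSpace ℝ (Fin N), ‖ζ‖ < δ →
        ∀ y : EuclideanSpace ℝ (Fin N),
          |ν + ‖y - ζ‖ ^ 2 / ν -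
              (1 + ‖y‖ ^ 2) *
                (1 - (ν - 1) * (‖y‖ ^ 2 - 1) / (1 + ‖y‖ ^ 2) -
                  2 * (inner ℝ ζ y : ℝ) / (1 + ‖y‖ ^ 2))|
            ≤ (1 + ‖y‖ ^ 2) * C * ((ν - 1) ^ 2 + ‖ζ‖ ^ 2 / (1 + ‖y‖ ^ 2)) :=
  stmt15_general N
end
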